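/- (Necessity in the characterization $QA_{\varphi,\psi}=\Lambda_\varphi$ iff $\psi\asymp 1$.) If there exist constants $K_1,K_2>0$ such that $K_1\,\|f\|_{\Lambda_\varphi}\le\|f\|_{\varphi,\psi}\le K_2\,\|f\|_{\Lambda_\varphi}$ for every measurable function $f$ on $[0,1]$, then $\psi$ is bounded on $[1,\infty)$ (hence $\psi\asymp 1$ on $[1,\infty)$, since $\psi$ is non-decreasing with $\psi(1)>0$). -/

import Mathlib

open MeasureTheory ENNReal Set Filter Topology

noncomputable section

/-- Lebesgue measure restricted to the interval `[0,1]`. -/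
def μ01 : Measure ℝ := volume.restrict (Set.Icc 0 1)

/-- `φ : [0,1] → [0,∞)` is concave, non-decreasing, and vanishes only at the origin. -/
structure IsPhi (φ : ℝ → ℝ) : Prop where
  concave : ConcaveOn ℝ (Set.Icc 0 1) φ
  mono : MonotoneOn φ (Set.Icc 0 1)
  zero : φ 0 = 0
  pos : ∀ t : ℝ, 0 < t → t ≤ 1 → 0 < φ t

/-- `ψ : [0,∞) → [0,∞)` is concave, non-decreasing, and vanishes only at the origin. -/
structure IsPsi (ψ : ℝ → ℝ) : Prop where
  concave : ConcaveOn ℝ (Set.Ici 0) ψ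
  mono : MonotoneOn ψ (Set.Ici 0)
  zero : ψ 0 = 0
  pos : ∀ t : ℝ, 0 < t → 0 < ψ t

/-- A sequence `g` of nonnegative `L^∞` functions with `|f| ≤ ∑ₙ gₙ` a.e. -/
def Admissible (f : ℝ → ℝ) (g : ℕ → ℝ → ℝ) : Prop :=
  (∀ n, AEMeasurable (g n) μ01) ∧
  (∀ n, eLpNorm (g n) ⊤ μ01 < ⊤) ∧
  (∀ n x, 0 ≤ g n x) ∧
  (∀ᵐ x ∂μ01, ENNReal.ofReal |f x| ≤ ∑' n : ℕ, ENNReal.ofReal (g n x))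

/-- The cost `∑ₙ ψ(n) ‖gₙ‖_∞ φ(‖gₙ‖₁/‖gₙ‖_∞)` of a decomposition (index shifted by 1;
`0/0 = 0` by the `ℝ≥0∞` division convention, and `φ 0 = 0`). -/
def seqCost (φ ψ : ℝ → ℝ) (g : ℕ → ℝ → ℝ) : ℝ≥0∞ :=
  ∑' n : ℕ, ENNReal.ofReal
    (ψ ((n : ℝ) + 1) * (eLpNorm (g n) ⊤ μ01).toReal *
      φ ((eLpNorm (g n) 1 μ01 / eLpNorm (g n) ⊤ μ01).toReal))

/-- The quasi-norm `‖f‖_{φ,ψ}` (equal to `∞` when no admissible decomposition exists). -/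
def QANorm (φ ψ : ℝ → ℝ) (f : ℝ → ℝ) : ℝ≥0∞ :=
  ⨅ (g : ℕ → ℝ → ℝ) (_ : Admissible f g), seqCost φ ψ g

/-- Membership in the space `QA_{φ,ψ}`. -/
def MemQA (φ ψ : ℝ → ℝ) (f : ℝ → ℝ) : Prop :=
  AEMeasurable f μ01 ∧ QANorm φ ψ f < ⊤

/-- The decreasing rearrangement `f*` of `f` on `[0,1]`. -/
def decRearr (f : ℝ → ℝ) (t : ℝ) : ℝ :=
  sInf {s : ℝ | 0 ≤ s ∧ μ01 {x | s < |f x|} ≤ ENNReal.ofReal t}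

/-- The limit `ζ(0⁺)` of a non-decreasing function `ζ` on `[0,1]`. -/
def limZero (ζ : ℝ → ℝ) : ℝ := sInf (ζ '' Set.Ioc 0 1)

/-- The Lorentz norm `‖f‖_{Λ_ζ} = ∫₀¹ f* dζ = ‖f‖_∞ ζ(0⁺) + ∫₀¹ f*(s) ζ'(s) ds`
(for `ζ` concave the derivative exists a.e. and `ζ` is absolutely continuous on `(0,1]`). -/
def lorentzNorm (ζ : ℝ → ℝ) (f : ℝ → ℝ) : ℝ≥0∞ :=
  eLpNorm f ⊤ μ01 * ENNReal.ofReal (limZero ζ) +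
    ∫⁻ s in Set.Ioc (0:ℝ) 1, ENNReal.ofReal (decRearr f s * deriv ζ s)

/-- Membership in the Lorentz space `Λ_ζ`. -/
def MemLorentz (ζ : ℝ → ℝ) (f : ℝ → ℝ) : Prop :=
  AEMeasurable f μ01 ∧ lorentzNorm ζ f < ⊤

/-- The quasi-concave function `φ_s(t) = inf_n max{sₙ,t} (φ(sₙ)/sₙ) ψ(n)` (index shifted by 1). -/
def phiSeq (φ ψ : ℝ → ℝ) (s : ℕ → ℝ) (t : ℝ) : ℝ :=
  if t = 0 then 0 else ⨅ n : ℕ, max (s n) t * (φ (s n) / s n) * ψ ((n : ℝ) + 1)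

/-- The function `τ(t) = φ(t) ψ(logbar(φ(t)/t))` with `logbar t = 1 + log⁺ t`. -/
def tauF (φ ψ : ℝ → ℝ) (t : ℝ) : ℝ :=
  if t = 0 then 0 else φ t * ψ (1 + max (Real.log (φ t / t)) 0)

/-!
Test the upper estimate `‖f‖_{φ,ψ} ≤ K₂ ‖f‖_{Λ_φ}` on `f = ∑_{k<N} b_k 𝟙_{I_k}` with `N = 2M`,
where the `I_k` are disjoint intervals of rapidly decreasing lengths `m_k` and `b_k φ(m_k) = 1/N`.
Then `‖f‖_{Λ_φ} ≤ 2`. In a decomposition `|f| ≤ ∑ₙ gₙ`, a summand covering a proportion `w` of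
one block costs at least `w ψ(n)/N`; the scales `m_k` are so far apart (by `φ(t)/t → ∞` and the
regularity of `φ`) that a summand covering a proportion `w` of two blocks costs at least
`w ψ(M)`. So the `M` cheap summands `gₙ`, `n < M`, essentially cover one block each, the other
`N - M = M` blocks cost `ψ(M)/N` each, and `‖f‖_{φ,ψ} ≥ ψ(M)/4`. Hence `ψ(M) ≤ 8 K₂`.
-/
instance isProbabilityMeasure_μ01 : IsProbabilityMeasure μ01 := ⟨by simp [μ01]⟩

theorem MonotoneOn.lintegral_enorm_deriv_le {f : ℝ → ℝ} {a b : ℝ} (hab : a ≤ b)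
    (hf : MonotoneOn f (Icc a b)) :
    ∫⁻ x in Icc a b, ‖deriv f x‖ₑ ≤ ENNReal.ofReal (f b - f a) := by
  obtain ⟨G, hGf, hG, hG'⟩ := hf.exists_tendsto_deriv_liminf_lintegral_enorm_le hab
  exact (lintegral_enorm_le_liminf_of_tendsto hGf fun n => (hG n).aemeasurable.enorm).trans hG'

namespace IsPhi

variable {φ : ℝ → ℝ}

theorem nonneg (hφ : IsPhi φ) {x : ℝ} (hx : 0 ≤ x) (hx1 : x ≤ 1) : 0 ≤ φ x := by
  rcases hx.eq_or_lt with rfl | hx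
  · exact hφ.zero.ge
  · exact (hφ.pos x hx hx1).le

theorem apply_le_apply (hφ : IsPhi φ) {x y : ℝ} (hx : 0 ≤ x) (hxy : x ≤ y) (hy : y ≤ 1) :
    φ x ≤ φ y :=
  hφ.mono ⟨hx, hxy.trans hy⟩ ⟨hx.trans hxy, hy⟩ hxy

theorem mul_apply_le_apply_mul (hφ : IsPhi φ) {l x : ℝ} (hl : 0 ≤ l) (hl1 : l ≤ 1)
    (hx : 0 ≤ x) (hx1 : x ≤ 1) : l * φ x ≤ φ (l * x) := by
  have h := hφ.concave.2 ⟨hx, hx1⟩ (left_mem_Icc.2 zero_le_one) hl (sub_nonneg.2 hl1)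
    (add_sub_cancel l 1)
  simpa [hφ.zero] using h

theorem apply_mul_le_mul_apply (hφ : IsPhi φ) {a x : ℝ} (ha : 1 ≤ a) (hx : 0 ≤ x)
    (hax : a * x ≤ 1) : φ (a * x) ≤ a * φ x := by
  have ha0 : 0 < a := zero_lt_one.trans_le ha
  have h := hφ.mul_apply_le_apply_mul (inv_nonneg.2 ha0.le) (inv_le_one_of_one_le₀ ha)
    (mul_nonneg ha0.le hx) hax
  rwa [inv_mul_cancel_left₀ ha0.ne', inv_mul_le_iff₀ ha0] at h

/-- `t ↦ t φ(s/t)` is non-decreasing, and so is `φ`. -/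
theorem mul_apply_div_le (hφ : IsPhi φ) {s t L A : ℝ} (ht : 0 < t) (hs : 0 ≤ s) (hst : s ≤ t)
    (hsL : s ≤ L) (hLA : L ≤ A) (htA : t ≤ A) : t * φ (s / t) ≤ A * φ (L / A) := by
  have hA : 0 < A := ht.trans_le htA
  have h := hφ.mul_apply_le_apply_mul (div_nonneg ht.le hA.le) ((div_le_one hA).2 htA)
    (div_nonneg hs ht.le) ((div_le_one ht).2 hst)
  rw [show t / A * (s / t) = s / A by field_simp] at h
  calc t * φ (s / t) = A * (t / A * φ (s / t)) := by field_simp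
    _ ≤ A * φ (L / A) := by
      gcongr
      exact h.trans (hφ.apply_le_apply (div_nonneg hs hA.le) (by gcongr) ((div_le_one hA).2 hLA))

theorem limZero_nonpos (hφ : IsPhi φ) (hφ0 : Tendsto φ (𝓝[>] 0) (𝓝 0)) : limZero φ ≤ 0 := by
  have hbdd : BddBelow (φ '' Ioc 0 1) := ⟨0, by
    rintro _ ⟨t, ht, rfl⟩
    exact hφ.nonneg ht.1.le ht.2⟩
  refine ge_of_tendsto hφ0 ?_
  filter_upwards [Ioc_mem_nhdsGT zero_lt_one] with t ht
  exact csInf_le hbdd (mem_image_of_mem φ ht)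

theorem lintegral_deriv_le (hφ : IsPhi φ) {b : ℝ} (hb : 0 ≤ b) (hb1 : b ≤ 1) :
    ∫⁻ x in Ioc 0 b, ENNReal.ofReal (deriv φ x) ≤ ENNReal.ofReal (φ b) := by
  have h := (hφ.mono.mono (Icc_subset_Icc_right hb1)).lintegral_enorm_deriv_le hb
  rw [hφ.zero, sub_zero] at h
  calc ∫⁻ x in Ioc 0 b, ENNReal.ofReal (deriv φ x)
      ≤ ∫⁻ x in Icc 0 b, ‖deriv φ x‖ₑ :=
        (lintegral_mono fun x => Real.ofReal_le_enorm _).trans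
          (lintegral_mono_set Ioc_subset_Icc_self)
    _ ≤ _ := h

end IsPhi

namespace IsPsi

variable {ψ : ℝ → ℝ}

theorem apply_le_apply (hψ : IsPsi ψ) {x y : ℝ} (hx : 0 ≤ x) (hxy : x ≤ y) : ψ x ≤ ψ y :=
  hψ.mono hx (hx.trans hxy) hxy

theorem nonneg (hψ : IsPsi ψ) {x : ℝ} (hx : 0 ≤ x) : 0 ≤ ψ x :=
  hψ.zero ▸ hψ.apply_le_apply le_rfl hx

end IsPsi

/-! ### Separated scales -/

theorem rpow_div_mul_le_of_monotoneOn {φ : ℝ → ℝ} {c p s t : ℝ}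
    (hreg : MonotoneOn (fun t => φ t / t ^ c) (Ioc 0 p)) (hs : 0 < s) (hst : s ≤ t)
    (htp : t ≤ p) : (t / s) ^ c * φ s ≤ φ t := by
  have ht : 0 < t := hs.trans_le hst
  have h : φ s / s ^ c ≤ φ t / t ^ c := hreg ⟨hs, hst.trans htp⟩ ⟨ht, htp⟩ hst
  calc (t / s) ^ c * φ s = t ^ c * (φ s / s ^ c) := by
        rw [Real.div_rpow ht.le hs.le]; ring
    _ ≤ t ^ c * (φ t / t ^ c) := by gcongr
    _ = φ t := mul_div_cancel₀ _ (Real.rpow_pos_of_pos ht c).ne'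

theorem exists_scales {φ : ℝ → ℝ} (hφslope : Tendsto (fun t => φ t / t) (𝓝[>] 0) atTop)
    (θ : ℝ) {e : ℝ} (he : 0 < e) :
    ∃ m : ℕ → ℝ, (∀ k, 0 < m k ∧ m k ≤ e) ∧ (∀ k, m (k + 1) ≤ m k / 2) ∧
      ∀ k, θ * (φ (m k) / m k) ≤ φ (m (k + 1)) / m (k + 1) := by
  have hstep : ∀ x : ℝ, 0 < x ∧ x ≤ e →
      ∃ y : ℝ, (0 < y ∧ y ≤ e) ∧ y ≤ x / 2 ∧ θ * (φ x / x) ≤ φ y / y := by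
    rintro x ⟨hx, hxe⟩
    have hsmall : ∀ᶠ y in 𝓝[>] (0 : ℝ), y ∈ Ioc 0 (x / 2) := Ioc_mem_nhdsGT (half_pos hx)
    obtain ⟨y, hθ, hy, hyx⟩ := ((hφslope.eventually_ge_atTop (θ * (φ x / x))).and hsmall).exists
    exact ⟨y, ⟨hy, by linarith⟩, hyx, hθ⟩
  choose! next hnext using hstep
  have hm : ∀ k, 0 < next^[k] e ∧ next^[k] e ≤ e := fun k => by
    induction k with
    | zero => exact ⟨he, le_rfl⟩
    | succ k ih => rw [Function.iterate_succ_apply']; exact (hnext _ ih).1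
  refine ⟨fun k => next^[k] e, hm, fun k => ?_, fun k => ?_⟩ <;>
    simp only [Function.iterate_succ_apply']
  exacts [(hnext _ (hm k)).2.1, (hnext _ (hm k)).2.2]

/-- The term `2 * m (j + n)` strengthens the claim for the induction. -/
theorem sum_range_add_add_two_mul_le {m : ℕ → ℝ} (hhalf : ∀ k, m (k + 1) ≤ m k / 2) (j n : ℕ) :
    ∑ i ∈ Finset.range n, m (j + i) + 2 * m (j + n) ≤ 2 * m j := by
  induction n with
  | zero => simp
  | succ n ih =>
    rw [Finset.sum_range_succ, ← add_assoc j n 1]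
    linarith [hhalf (j + n)]

theorem sum_Ico_le_two_mul {m : ℕ → ℝ} (hm : ∀ k, 0 ≤ m k) (hhalf : ∀ k, m (k + 1) ≤ m k / 2)
    (j N : ℕ) : ∑ i ∈ Finset.Ico j N, m i ≤ 2 * m j := by
  rw [Finset.sum_Ico_eq_sum_range]
  linarith [sum_range_add_add_two_mul_le hhalf j (N - j), hm (j + (N - j))]

theorem mul_le_of_lt_of_mul_le_succ {r : ℕ → ℝ} {θ : ℝ} (hθ : 1 ≤ θ) (hr : ∀ k, 0 ≤ r k)
    (h : ∀ k, θ * r k ≤ r (k + 1)) {j k : ℕ} (hjk : j < k) : θ * r j ≤ r k :=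
  (h j).trans <| monotone_nat_of_le_succ (fun i => (le_mul_of_one_le_left (hr i) hθ).trans (h i))
    (Nat.succ_le_of_lt hjk)

/-- The regularity of `φ` turns a gap `Q^{1/c}` between the slopes `φ(s)/s` and `φ(u)/u` into a
gain `Q` in `φ`. -/
theorem mul_apply_le_apply_of_slope_le {φ : ℝ → ℝ} {c p Q s u : ℝ}
    (hreg : MonotoneOn (fun t => φ t / t ^ c) (Ioc 0 p)) (hc : 0 < c) (hQ : 1 ≤ Q) (hs : 0 < s)
    (hu : 0 < u) (hup : u ≤ p) (hφs : 0 < φ s) (hφsu : φ s ≤ φ u)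
    (hslope : Q ^ c⁻¹ * (φ u / u) ≤ φ s / s) : Q * φ s ≤ φ (u * (φ s / φ u)) := by
  have hφu : 0 < φ u := hφs.trans_le hφsu
  set T := u * (φ s / φ u)
  have hθ : 1 ≤ Q ^ c⁻¹ := Real.one_le_rpow hQ (inv_nonneg.2 hc.le)
  have hTs : Q ^ c⁻¹ ≤ T / s := by
    rwa [show T / s = (φ s / s) / (φ u / u) by simp only [T]; field_simp,
      le_div_iff₀ (div_pos hφu hu)]
  have hsT : s ≤ T := by
    rw [← one_le_div hs]
    exact hθ.trans hTs
  have hTp : T ≤ p := (mul_le_of_le_one_right hu.le ((div_le_one hφu).2 hφsu)).trans hup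
  calc Q * φ s = (Q ^ c⁻¹) ^ c * φ s := by rw [Real.rpow_inv_rpow (by linarith) hc.ne']
    _ ≤ (T / s) ^ c * φ s :=
        mul_le_mul_of_nonneg_right (Real.rpow_le_rpow (by linarith) hTs hc.le) hφs.le
    _ ≤ φ T := rpow_div_mul_le_of_monotoneOn hreg hs hsT hTp

/-- Scales `m 0 > m 1 > ⋯` in `(0, 1/2]`, decreasing at least geometrically, such that covering
the blocks of lengths `m j` and `m k`, `j < k`, by a single function costs `Q` times as much as
covering the block of length `m k` alone (see `SeparatedScales.min_coverFrac_mul_le_cost`). -/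
structure SeparatedScales (φ : ℝ → ℝ) (Q : ℝ) (m : ℕ → ℝ) : Prop where
  pos : ∀ k, 0 < m k
  le_half : ∀ k, m k ≤ 1 / 2
  succ_le_half : ∀ k, m (k + 1) ≤ m k / 2
  sep : ∀ j k, j < k → Q * φ (m k) ≤ φ (m j * (φ (m k) / φ (m j)))

theorem exists_separatedScales {φ : ℝ → ℝ} (hφ : IsPhi φ)
    (hφslope : Tendsto (fun t => φ t / t) (𝓝[>] 0) atTop) {c p Q : ℝ} (hc : 0 < c) (hp : 0 < p)
    (hreg : MonotoneOn (fun t => φ t / t ^ c) (Ioc 0 p)) (hQ : 1 ≤ Q) :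
    ∃ m, SeparatedScales φ Q m := by
  obtain ⟨m, hm, hhalf, hslope⟩ := exists_scales hφslope (Q ^ c⁻¹) (lt_min hp one_half_pos)
  have hm1 : ∀ k, m k ≤ 1 := fun k => (hm k).2.trans ((min_le_right _ _).trans (by norm_num))
  have hφm : ∀ k, 0 < φ (m k) := fun k => hφ.pos _ (hm k).1 (hm1 k)
  have hanti : Antitone m :=
    antitone_nat_of_succ_le fun k => (hhalf k).trans (half_le_self (hm k).1.le)
  refine ⟨m, fun k => (hm k).1, fun k => (hm k).2.trans (min_le_right _ _), hhalf,
    fun j k hjk => ?_⟩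
  exact mul_apply_le_apply_of_slope_le hreg hc hQ (hm k).1 (hm j).1
    ((hm j).2.trans (min_le_left _ _)) (hφm k)
    (hφ.apply_le_apply (hm k).1.le (hanti hjk.le) (hm1 j))
    (mul_le_of_lt_of_mul_le_succ (Real.one_le_rpow hQ (inv_nonneg.2 hc.le))
      (fun i => (div_pos (hφm i) (hm i).1).le) hslope hjk)

namespace SeparatedScales

variable {φ : ℝ → ℝ} {Q : ℝ} {m : ℕ → ℝ}

theorem nonneg (hm : SeparatedScales φ Q m) (k : ℕ) : 0 ≤ m k := (hm.pos k).le

theorem le_one (hm : SeparatedScales φ Q m) (k : ℕ) : m k ≤ 1 :=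
  (hm.le_half k).trans (by norm_num)

theorem apply_pos (hm : SeparatedScales φ Q m) (hφ : IsPhi φ) (k : ℕ) : 0 < φ (m k) :=
  hφ.pos _ (hm.pos k) (hm.le_one k)

theorem apply_le_apply (hm : SeparatedScales φ Q m) (hφ : IsPhi φ) {j k : ℕ} (hjk : j ≤ k) :
    φ (m k) ≤ φ (m j) :=
  hφ.apply_le_apply (hm.nonneg k)
    (antitone_nat_of_succ_le (fun i => (hm.succ_le_half i).trans (half_le_self (hm.nonneg i))) hjk)
    (hm.le_one j)

theorem sum_Ico_le_two_mul (hm : SeparatedScales φ Q m) (j N : ℕ) :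
    ∑ i ∈ Finset.Ico j N, m i ≤ 2 * m j :=
  _root_.sum_Ico_le_two_mul hm.nonneg hm.succ_le_half j N

theorem sum_range_le_one (hm : SeparatedScales φ Q m) (N : ℕ) : ∑ i ∈ Finset.range N, m i ≤ 1 := by
  rw [Finset.range_eq_Ico]
  linarith [hm.sum_Ico_le_two_mul 0 N, hm.le_half 0]

end SeparatedScales

/-! ### Step functions and their Lorentz norm -/

theorem decRearr_nonneg (f : ℝ → ℝ) (s : ℝ) : 0 ≤ decRearr f s :=
  Real.sInf_nonneg fun _ hy => hy.1

theorem decRearr_le {f : ℝ → ℝ} {s B : ℝ} (hB : 0 ≤ B)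
    (h : μ01 {x | B < |f x|} ≤ ENNReal.ofReal s) : decRearr f s ≤ B :=
  csInf_le ⟨0, fun _ hy => hy.1⟩ ⟨hB, h⟩

section Blocks

variable {m b : ℕ → ℝ} {N : ℕ}

def block (m : ℕ → ℝ) (k : ℕ) : Set ℝ :=
  Ico (∑ i ∈ Finset.range k, m i) (∑ i ∈ Finset.range (k + 1), m i)

def blockFn (m b : ℕ → ℝ) (N : ℕ) (y : ℝ) : ℝ :=
  ∑ k ∈ Finset.range N, (block m k).indicator (fun _ => b k) y

theorem pairwise_disjoint_block (hm : ∀ k, 0 ≤ m k) :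
    Pairwise (Function.onFun Disjoint (block m)) := by
  have hmono : Monotone fun k => ∑ i ∈ Finset.range k, m i :=
    monotone_nat_of_le_succ fun k => by simp [Finset.sum_range_succ, hm k]
  have h := hmono.pairwise_disjoint_on_Ico_succ
  simp only [Order.succ_eq_add_one] at h
  exact h

theorem blockFn_of_mem (hm : ∀ k, 0 ≤ m k) {k : ℕ} {y : ℝ} (hk : k < N) (hy : y ∈ block m k) :
    blockFn m b N y = b k := by
  rw [blockFn, Finset.sum_eq_single_of_mem k (Finset.mem_range.2 hk)]
  · exact indicator_of_mem hy _
  · intro j _ hjk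
    exact indicator_of_notMem (fun hj => (pairwise_disjoint_block hm hjk).le_bot ⟨hj, hy⟩) _

theorem blockFn_of_forall_notMem {y : ℝ} (hy : ∀ k < N, y ∉ block m k) : blockFn m b N y = 0 :=
  Finset.sum_eq_zero fun k hk => indicator_of_notMem (hy k (Finset.mem_range.1 hk)) _

theorem measurableSet_block (k : ℕ) : MeasurableSet (block m k) := measurableSet_Ico

theorem measurable_blockFn : Measurable (blockFn m b N) :=
  Finset.measurable_sum _ fun k _ => measurable_const.indicator (measurableSet_block k)

theorem volume_block (k : ℕ) : volume (block m k) = ENNReal.ofReal (m k) := by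
  simp [block, Real.volume_Ico, Finset.sum_range_succ]

theorem sum_Ico_le_sum_range (hm : ∀ k, 0 ≤ m k) (j : ℕ) :
    ∑ i ∈ Finset.Ico j N, m i ≤ ∑ i ∈ Finset.range N, m i :=
  Finset.sum_le_sum_of_subset_of_nonneg (fun _ hi => Finset.mem_range.2 (Finset.mem_Ico.1 hi).2)
    fun i _ _ => hm i

theorem μ01_block (hm : ∀ k, 0 ≤ m k) (hsum : ∑ i ∈ Finset.range N, m i ≤ 1) {k : ℕ}
    (hk : k < N) : μ01 (block m k) = ENNReal.ofReal (m k) := by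
  have hsub : block m k ⊆ Icc 0 1 := fun y hy =>
    ⟨(Finset.sum_nonneg fun i _ => hm i).trans hy.1, hy.2.le.trans <|
      (Finset.sum_le_sum_of_subset_of_nonneg (Finset.range_subset_range.2 hk)
        fun i _ _ => hm i).trans hsum⟩
  rw [μ01, Measure.restrict_apply' measurableSet_Icc, inter_eq_left.2 hsub, volume_block]

/-- The `k` in question form a final segment of `range N`. -/
theorem sum_filter_tail_lt_le (hm : ∀ k, 0 ≤ m k) {s : ℝ} (hs : 0 ≤ s) :
    ∑ k ∈ (Finset.range N).filter (fun k => ∑ i ∈ Finset.Ico k N, m i < s), m k ≤ s := by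
  set S := (Finset.range N).filter (fun k => ∑ i ∈ Finset.Ico k N, m i < s)
  rcases S.eq_empty_or_nonempty with hS | hS
  · simp [hS, hs]
  have hsub : S ⊆ Finset.Ico (S.min' hS) N := fun k hk =>
    Finset.mem_Ico.2 ⟨S.min'_le k hk, Finset.mem_range.1 (Finset.mem_filter.1 hk).1⟩
  exact (Finset.sum_le_sum_of_subset_of_nonneg hsub fun i _ _ => hm i).trans
    (Finset.mem_filter.1 (S.min'_mem hS)).2.le

theorem decRearr_blockFn_le (hm : ∀ k, 0 ≤ m k) (hb : ∀ k, 0 ≤ b k) {s : ℝ} (hs : 0 < s) :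
    decRearr (blockFn m b N) s ≤
      ∑ j ∈ Finset.range N, (Ioc 0 (∑ i ∈ Finset.Ico j N, m i)).indicator (fun _ => b j) s := by
  set B := ∑ j ∈ Finset.range N, (Ioc 0 (∑ i ∈ Finset.Ico j N, m i)).indicator (fun _ => b j) s
  have hterm : ∀ j, 0 ≤ (Ioc 0 (∑ i ∈ Finset.Ico j N, m i)).indicator (fun _ => b j) s :=
    fun j => indicator_nonneg (fun _ _ => hb j) _
  set S := (Finset.range N).filter (fun k => ∑ i ∈ Finset.Ico k N, m i < s)
  have hsub : {x | B < |blockFn m b N x|} ⊆ ⋃ k ∈ S, block m k := by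
    intro x (hx : B < |blockFn m b N x|)
    by_cases hx' : ∃ k < N, x ∈ block m k
    · obtain ⟨k, hk, hxk⟩ := hx'
      rw [blockFn_of_mem hm hk hxk, abs_of_nonneg (hb k)] at hx
      refine mem_biUnion (Finset.mem_filter.2 ⟨Finset.mem_range.2 hk, ?_⟩) hxk
      by_contra! hks
      have hbB := Finset.single_le_sum (fun j _ => hterm j) (Finset.mem_range.2 hk)
      rw [indicator_of_mem (show s ∈ Ioc 0 _ from ⟨hs, hks⟩)] at hbB
      linarith
    · push Not at hx'
      rw [blockFn_of_forall_notMem hx', abs_zero] at hx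
      linarith [Finset.sum_nonneg fun j (_ : j ∈ Finset.range N) => hterm j]
  refine decRearr_le (Finset.sum_nonneg fun j _ => hterm j) ?_
  calc μ01 {x | B < |blockFn m b N x|} ≤ ∑ k ∈ S, μ01 (block m k) :=
        (measure_mono hsub).trans (measure_biUnion_finset_le _ _)
    _ ≤ ∑ k ∈ S, ENNReal.ofReal (m k) := Finset.sum_le_sum fun k _ =>
        (Measure.restrict_apply_le _ _).trans (volume_block k).le
    _ = ENNReal.ofReal (∑ k ∈ S, m k) := (ofReal_sum_of_nonneg fun k _ => hm k).symm
    _ ≤ ENNReal.ofReal s := ofReal_le_ofReal (sum_filter_tail_lt_le hm hs.le)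

theorem lorentzNorm_blockFn_le_sum {φ : ℝ → ℝ} (hφ : IsPhi φ) (hφ0 : Tendsto φ (𝓝[>] 0) (𝓝 0))
    (hm : ∀ k, 0 ≤ m k) (hb : ∀ k, 0 ≤ b k) (hsum : ∑ i ∈ Finset.range N, m i ≤ 1) :
    lorentzNorm φ (blockFn m b N) ≤
      ∑ j ∈ Finset.range N, ENNReal.ofReal (b j * φ (∑ i ∈ Finset.Ico j N, m i)) := by
  set F : ℕ → ℝ → ℝ≥0∞ := fun j => (Ioc 0 (∑ i ∈ Finset.Ico j N, m i)).indicator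
    fun s => ENNReal.ofReal (b j) * ENNReal.ofReal (deriv φ s)
  have hFm : ∀ j, Measurable (F j) := fun j =>
    (measurable_const.mul (measurable_deriv φ).ennreal_ofReal).indicator measurableSet_Ioc
  have hpoint : ∀ s ∈ Ioc (0 : ℝ) 1,
      ENNReal.ofReal (decRearr (blockFn m b N) s * deriv φ s) ≤ ∑ j ∈ Finset.range N, F j s := by
    intro s hs
    rw [ENNReal.ofReal_mul (decRearr_nonneg _ _)]
    refine (mul_le_mul_left (ofReal_le_ofReal (decRearr_blockFn_le hm hb hs.1)) _).trans_eq ?_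
    rw [ofReal_sum_of_nonneg fun j _ => indicator_nonneg (fun _ _ => hb j) _, Finset.sum_mul]
    refine Finset.sum_congr rfl fun j _ => ?_
    by_cases hsj : s ∈ Ioc 0 (∑ i ∈ Finset.Ico j N, m i)
    · simp only [F, indicator_of_mem hsj]
    · simp only [F, indicator_of_notMem hsj, ENNReal.ofReal_zero, zero_mul]
  rw [lorentzNorm, ofReal_of_nonpos (hφ.limZero_nonpos hφ0), mul_zero, zero_add]
  calc ∫⁻ s in Ioc 0 1, ENNReal.ofReal (decRearr (blockFn m b N) s * deriv φ s)
      ≤ ∫⁻ s, ∑ j ∈ Finset.range N, F j s :=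
        (setLIntegral_mono' measurableSet_Ioc hpoint).trans (setLIntegral_le_lintegral _ _)
    _ = ∑ j ∈ Finset.range N, ENNReal.ofReal (b j) *
          ∫⁻ s in Ioc 0 (∑ i ∈ Finset.Ico j N, m i), ENNReal.ofReal (deriv φ s) := by
        rw [lintegral_finsetSum _ fun j _ => hFm j]
        refine Finset.sum_congr rfl fun j _ => ?_
        rw [lintegral_indicator measurableSet_Ioc,
          lintegral_const_mul _ (measurable_deriv φ).ennreal_ofReal]
    _ ≤ ∑ j ∈ Finset.range N, ENNReal.ofReal (b j) *
          ENNReal.ofReal (φ (∑ i ∈ Finset.Ico j N, m i)) := by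
        gcongr with j
        exact hφ.lintegral_deriv_le (Finset.sum_nonneg fun i _ => hm i)
          ((sum_Ico_le_sum_range hm j).trans hsum)
    _ = _ := Finset.sum_congr rfl fun j _ => (ENNReal.ofReal_mul (hb j)).symm

end Blocks

theorem natCast_mul_ofReal_div {N : ℕ} (hN : 0 < N) (x : ℝ) :
    (N : ℝ≥0∞) * ENNReal.ofReal (x / N) = ENNReal.ofReal x := by
  rw [← ofReal_natCast, ← ofReal_mul N.cast_nonneg, mul_div_cancel₀ _ (Nat.cast_ne_zero.2 hN.ne')]

/-- The heights for which each block `b k · 𝟙 (block m k)` has `Λ_φ`-norm `b k φ(m k) = 1/N`. -/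
def blockHeight (φ : ℝ → ℝ) (m : ℕ → ℝ) (N k : ℕ) : ℝ := ((N : ℝ) * φ (m k))⁻¹

section BlockHeight

variable {φ : ℝ → ℝ} {m : ℕ → ℝ} {N k : ℕ}

theorem blockHeight_pos (hN : 0 < N) (hφm : 0 < φ (m k)) : 0 < blockHeight φ m N k :=
  inv_pos.2 (mul_pos (Nat.cast_pos.2 hN) hφm)

theorem blockHeight_mul_apply (hφm : φ (m k) ≠ 0) :
    blockHeight φ m N k * φ (m k) = (N : ℝ)⁻¹ := by
  rw [blockHeight, mul_inv, inv_mul_cancel_right₀ hφm]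

end BlockHeight

theorem SeparatedScales.lorentzNorm_blockFn_le {φ : ℝ → ℝ} {Q : ℝ} {m : ℕ → ℝ}
    (hm : SeparatedScales φ Q m) (hφ : IsPhi φ) (hφ0 : Tendsto φ (𝓝[>] 0) (𝓝 0)) {N : ℕ}
    (hN : 0 < N) : lorentzNorm φ (blockFn m (blockHeight φ m N) N) ≤ 2 := by
  have hb : ∀ k, 0 < blockHeight φ m N k := fun k => blockHeight_pos hN (hm.apply_pos hφ k)
  refine (lorentzNorm_blockFn_le_sum hφ hφ0 hm.nonneg (fun k => (hb k).le)
    (hm.sum_range_le_one N)).trans ?_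
  calc ∑ j ∈ Finset.range N,
        ENNReal.ofReal (blockHeight φ m N j * φ (∑ i ∈ Finset.Ico j N, m i))
      ≤ ∑ _j ∈ Finset.range N, ENNReal.ofReal (2 / N) := by
        refine Finset.sum_le_sum fun j _ => ofReal_le_ofReal ?_
        have htail : φ (∑ i ∈ Finset.Ico j N, m i) ≤ 2 * φ (m j) :=
          (hφ.apply_le_apply (Finset.sum_nonneg fun i _ => hm.nonneg i)
            (hm.sum_Ico_le_two_mul j N) (by linarith [hm.le_half j])).trans
            (hφ.apply_mul_le_mul_apply one_le_two (hm.nonneg j) (by linarith [hm.le_half j]))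
        calc blockHeight φ m N j * φ (∑ i ∈ Finset.Ico j N, m i)
            ≤ blockHeight φ m N j * (2 * φ (m j)) := mul_le_mul_of_nonneg_left htail (hb j).le
          _ = 2 / N := by
            rw [mul_left_comm, blockHeight_mul_apply (hm.apply_pos hφ j).ne', div_eq_mul_inv]
    _ = 2 := by
        rw [Finset.sum_const, Finset.card_range, nsmul_eq_mul, natCast_mul_ofReal_div hN,
          ofReal_ofNat]

/-! ### Decompositions of a step function -/

def phiCost (φ h : ℝ → ℝ) : ℝ :=
  (eLpNorm h ⊤ μ01).toReal * φ ((eLpNorm h 1 μ01 / eLpNorm h ⊤ μ01).toReal)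

theorem seqCost_eq (φ ψ : ℝ → ℝ) (g : ℕ → ℝ → ℝ) :
    seqCost φ ψ g = ∑' n : ℕ, ENNReal.ofReal (ψ ((n : ℝ) + 1) * phiCost φ (g n)) := by
  simp only [seqCost, phiCost, mul_assoc]

theorem phiCost_nonneg {φ : ℝ → ℝ} (hφ : IsPhi φ) {h : ℝ → ℝ} (hh : AEMeasurable h μ01) :
    0 ≤ phiCost φ h := by
  have hle : eLpNorm h 1 μ01 / eLpNorm h ⊤ μ01 ≤ 1 :=
    div_le_of_le_mul <| (one_mul (eLpNorm h ⊤ μ01)).symm ▸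
      eLpNorm_le_eLpNorm_of_exponent_le le_top hh.aestronglyMeasurable
  exact mul_nonneg toReal_nonneg (hφ.nonneg toReal_nonneg (toReal_le_of_le_ofReal zero_le_one
    (by rwa [ENNReal.ofReal_one])))

theorem setLIntegral_ofReal_le_eLpNorm_top_mul (h : ℝ → ℝ) (J : Set ℝ) :
    ∫⁻ x in J, ENNReal.ofReal (h x) ∂μ01 ≤ eLpNorm h ⊤ μ01 * μ01 J := by
  rw [← setLIntegral_const]
  refine lintegral_mono_ae (ae_restrict_of_ae ?_)
  filter_upwards [ae_le_eLpNormEssSup (f := h) (μ := μ01)] with x hx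
  rw [eLpNorm_exponent_top]
  exact (Real.ofReal_le_enorm _).trans hx

theorem setLIntegral_ofReal_le_eLpNorm_one (h : ℝ → ℝ) (I : Set ℝ) :
    ∫⁻ x in I, ENNReal.ofReal (h x) ∂μ01 ≤ eLpNorm h 1 μ01 := by
  rw [eLpNorm_one_eq_lintegral_enorm]
  exact (setLIntegral_le_lintegral _ _).trans (lintegral_mono fun x => Real.ofReal_le_enorm _)

/-- Such an `h` has `‖h‖₁ ≥ s` and `‖h‖_∞ ≥ t`. -/
theorem mul_apply_div_le_phiCost {φ : ℝ → ℝ} (hφ : IsPhi φ) {h : ℝ → ℝ}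
    (hh : AEMeasurable h μ01) (htop : eLpNorm h ⊤ μ01 ≠ ⊤) {I J : Set ℝ} {mJ s t : ℝ}
    (hmJ : 0 < mJ) (hJ : μ01 J = ENNReal.ofReal mJ) (ht : 0 < t) (hs : 0 ≤ s) (hst : s ≤ t)
    (hsI : ENNReal.ofReal s ≤ ∫⁻ x in I, ENNReal.ofReal (h x) ∂μ01)
    (htJ : ENNReal.ofReal (t * mJ) ≤ ∫⁻ x in J, ENNReal.ofReal (h x) ∂μ01) :
    t * φ (s / t) ≤ phiCost φ h := by
  have hℓA : eLpNorm h 1 μ01 ≤ eLpNorm h ⊤ μ01 :=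
    eLpNorm_le_eLpNorm_of_exponent_le le_top hh.aestronglyMeasurable
  have htA : t ≤ (eLpNorm h ⊤ μ01).toReal := by
    have h1 := htJ.trans (hJ ▸ setLIntegral_ofReal_le_eLpNorm_top_mul h J)
    rw [← ofReal_toReal htop, ← ofReal_mul toReal_nonneg,
      ofReal_le_ofReal_iff (mul_nonneg toReal_nonneg hmJ.le)] at h1
    exact le_of_mul_le_mul_right h1 hmJ
  have hsℓ : s ≤ (eLpNorm h 1 μ01).toReal :=
    (ofReal_le_iff_le_toReal (ne_top_of_le_ne_top htop hℓA)).1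
      (hsI.trans (setLIntegral_ofReal_le_eLpNorm_one h I))
  rw [phiCost, toReal_div]
  exact hφ.mul_apply_div_le ht hs hst hsℓ (toReal_mono htop hℓA) htA

section Combinatorics

variable {ι : Type*} [DecidableEq ι]

/-- Every weight other than the largest one is the minimum of two weights. -/
theorem sum_mul_le_of_min_mul_le (s : Finset ι) (α : ι → ℝ≥0∞) {y a c : ℝ≥0∞}
    (hmax : ∀ k ∈ s, α k * y ≤ a)
    (hpair : ∀ j ∈ s, ∀ k ∈ s, j ≠ k → min (α j) (α k) * (s.card * y) ≤ c) :
    (∑ k ∈ s, α k) * y ≤ a + c := by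
  rcases s.eq_empty_or_nonempty with rfl | hs
  · simp
  obtain ⟨k₀, hk₀, hk₀max⟩ := s.exists_max_image α hs
  have hrest : (∑ k ∈ s.erase k₀, α k) * y * s.card ≤ c * s.card :=
    calc (∑ k ∈ s.erase k₀, α k) * y * s.card
        = ∑ k ∈ s.erase k₀, min (α k) (α k₀) * (s.card * y) := by
          rw [Finset.sum_mul, Finset.sum_mul]
          refine Finset.sum_congr rfl fun k hk => ?_
          rw [min_eq_left (hk₀max k (Finset.mem_of_mem_erase hk))]
          ring
      _ ≤ ∑ _k ∈ s.erase k₀, c := Finset.sum_le_sum fun k hk =>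
          hpair k (Finset.mem_of_mem_erase hk) k₀ hk₀ (Finset.ne_of_mem_erase hk)
      _ ≤ c * s.card := by
          rw [Finset.sum_const, nsmul_eq_mul, mul_comm]
          gcongr
          exact Finset.erase_subset k₀ s
  rw [← Finset.add_sum_erase s α hk₀, add_mul]
  exact add_le_add (hmax k₀ hk₀)
    ((ENNReal.mul_le_mul_iff_left (by simpa using hs.ne_empty) (natCast_ne_top _)).1 hrest)

/-- By `sum_mul_le_of_min_mul_le`, row `n` carries total weight at most `1` (if `n < M`) plus
`2 cost n / y`, while every column carries weight at least `1`. -/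
theorem mul_le_add_tsum_of_cover {N M : ℕ} {y : ℝ≥0∞} (α : ℕ → ℕ → ℝ≥0∞) (cost : ℕ → ℝ≥0∞)
    (hcover : ∀ k < N, 1 ≤ ∑' n, α n k) (hle : ∀ n k, α n k ≤ 1)
    (hlate : ∀ n, M ≤ n → ∀ k < N, α n k * y ≤ cost n)
    (hpair : ∀ n, ∀ k < N, ∀ j < k, min (α n j) (α n k) * (N * y) ≤ cost n) :
    N * y ≤ M * y + 2 * ∑' n, cost n := by
  have hrow : ∀ n, (∑ k ∈ Finset.range N, α n k) * y ≤ (if n < M then y else 0) + 2 * cost n := by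
    intro n
    rw [two_mul, ← add_assoc]
    refine sum_mul_le_of_min_mul_le _ _ (fun k hk => ?_) fun j hj k hk hjk => ?_
    · split_ifs with hn
      · exact le_add_right (mul_le_of_le_one_left' (hle n k))
      · exact (zero_add (cost n)).symm ▸ hlate n (not_lt.1 hn) k (Finset.mem_range.1 hk)
    · rw [Finset.card_range]
      rcases hjk.lt_or_gt with h | h
      · exact hpair n k (Finset.mem_range.1 hk) j h
      · rw [min_comm]
        exact hpair n j (Finset.mem_range.1 hj) k h
  calc (N : ℝ≥0∞) * y = (∑ _k ∈ Finset.range N, (1 : ℝ≥0∞)) * y := by simp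
    _ ≤ (∑ k ∈ Finset.range N, ∑' n, α n k) * y := by
        gcongr with k hk
        exact hcover k (Finset.mem_range.1 hk)
    _ = ∑' n, (∑ k ∈ Finset.range N, α n k) * y := by
        rw [← Summable.tsum_finsetSum fun _ _ => ENNReal.summable, ENNReal.tsum_mul_right]
    _ ≤ ∑' n, ((if n < M then y else 0) + 2 * cost n) := ENNReal.tsum_le_tsum hrow
    _ = M * y + 2 * ∑' n, cost n := by
        rw [ENNReal.tsum_add, ENNReal.tsum_mul_left,
          tsum_eq_sum (s := Finset.range M) fun n hn => if_neg (by simpa using hn),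
          Finset.sum_congr rfl fun n hn => if_pos (Finset.mem_range.1 hn)]
        simp

theorem one_le_tsum_min_div_one {β : ℕ → ℝ≥0∞} {B : ℝ≥0∞} (hB : B ≠ 0) (hBtop : B ≠ ⊤)
    (h : B ≤ ∑' n, β n) : 1 ≤ ∑' n, min (β n / B) 1 := by
  by_cases hall : ∀ n, β n / B ≤ 1
  · calc (1 : ℝ≥0∞) = B / B := (ENNReal.div_self hB hBtop).symm
      _ ≤ (∑' n, β n) / B := by gcongr
      _ = ∑' n, min (β n / B) 1 := by
        simp only [div_eq_mul_inv, ENNReal.tsum_mul_right.symm]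
        exact tsum_congr fun n => (min_eq_left (hall n)).symm
  · push Not at hall
    obtain ⟨n, hn⟩ := hall
    exact (min_eq_right hn.le).symm.le.trans (ENNReal.le_tsum n)

end Combinatorics

section Covering

variable {m b : ℕ → ℝ} {N : ℕ}

/-- The proportion, capped at `1`, of the mass `b k · m k` of `blockFn m b N` on `block m k`
that `h` carries. -/
def coverFrac (m b : ℕ → ℝ) (h : ℝ → ℝ) (k : ℕ) : ℝ≥0∞ :=
  min ((∫⁻ x in block m k, ENNReal.ofReal (h x) ∂μ01) / ENNReal.ofReal (b k * m k)) 1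

theorem coverFrac_le_one (h : ℝ → ℝ) (k : ℕ) : coverFrac m b h k ≤ 1 := min_le_right _ _

theorem coverFrac_mul_le {h : ℝ → ℝ} {k : ℕ} (hbm : 0 < b k * m k) :
    coverFrac m b h k * ENNReal.ofReal (b k * m k) ≤
      ∫⁻ x in block m k, ENNReal.ofReal (h x) ∂μ01 :=
  (mul_le_mul_left (min_le_left _ _) _).trans_eq
    (ENNReal.div_mul_cancel (ofReal_pos.2 hbm).ne' ofReal_ne_top)

theorem one_le_tsum_coverFrac (hm : ∀ k, 0 < m k) (hb : ∀ k, 0 < b k)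
    (hsum : ∑ i ∈ Finset.range N, m i ≤ 1) {g : ℕ → ℝ → ℝ} (hg : Admissible (blockFn m b N) g)
    {k : ℕ} (hk : k < N) : 1 ≤ ∑' n, coverFrac m b (g n) k := by
  have hm0 : ∀ k, 0 ≤ m k := fun k => (hm k).le
  refine one_le_tsum_min_div_one (ofReal_pos.2 (mul_pos (hb k) (hm k))).ne' ofReal_ne_top ?_
  calc ENNReal.ofReal (b k * m k)
      = ∫⁻ x in block m k, ENNReal.ofReal |blockFn m b N x| ∂μ01 := by
        rw [setLIntegral_congr_fun (measurableSet_block k) fun y hy => by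
            rw [blockFn_of_mem hm0 hk hy, abs_of_pos (hb k)],
          setLIntegral_const, μ01_block hm0 hsum hk, ← ofReal_mul (hb k).le]
    _ ≤ ∫⁻ x in block m k, ∑' n, ENNReal.ofReal (g n x) ∂μ01 :=
        lintegral_mono_ae (ae_restrict_of_ae hg.2.2.2)
    _ = ∑' n, ∫⁻ x in block m k, ENNReal.ofReal (g n x) ∂μ01 :=
        lintegral_tsum fun n => (hg.1 n).ennreal_ofReal.restrict

/-- A function covering a proportion `w` of the blocks `j` and `k` has `‖h‖₁ ≥ w b_j m_j` and
`‖h‖_∞ ≥ w b_k`. -/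
theorem min_coverFrac_mul_le_phiCost {φ : ℝ → ℝ} (hφ : IsPhi φ) (hm : ∀ k, 0 < m k)
    (hb : ∀ k, 0 < b k) (hsum : ∑ i ∈ Finset.range N, m i ≤ 1) {h : ℝ → ℝ}
    (hh : AEMeasurable h μ01) (htop : eLpNorm h ⊤ μ01 ≠ ⊤) {j k : ℕ} (hk : k < N)
    (hjk : b j * m j ≤ b k) {a : ℝ} (ha : 0 ≤ a) :
    min (coverFrac m b h j) (coverFrac m b h k) *
        ENNReal.ofReal (a * (b k * φ (b j * m j / b k))) ≤ ENNReal.ofReal (a * phiCost φ h) := by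
  set w := min (coverFrac m b h j) (coverFrac m b h k)
  have hw : ENNReal.ofReal w.toReal = w :=
    ofReal_toReal (ne_top_of_le_ne_top one_ne_top ((min_le_right _ _).trans (coverFrac_le_one _ _)))
  rw [← hw, ← ofReal_mul toReal_nonneg, mul_left_comm]
  refine ofReal_le_ofReal (mul_le_mul_of_nonneg_left ?_ ha)
  rcases (toReal_nonneg : 0 ≤ w.toReal).eq_or_lt with hw0 | hw0
  · rw [← hw0, zero_mul]
    exact phiCost_nonneg hφ hh
  have hcov : ∀ i, w ≤ coverFrac m b h i →
      ENNReal.ofReal (w.toReal * (b i * m i)) ≤ ∫⁻ x in block m i, ENNReal.ofReal (h x) ∂μ01 :=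
    fun i hi => by
      rw [ofReal_mul toReal_nonneg, hw]
      exact (mul_le_mul_left hi _).trans (coverFrac_mul_le (mul_pos (hb i) (hm i)))
  have hcost := mul_apply_div_le_phiCost hφ hh htop (hm k) (μ01_block (fun i => (hm i).le) hsum hk)
    (mul_pos hw0 (hb k)) (mul_nonneg hw0.le (mul_pos (hb j) (hm j)).le)
    (mul_le_mul_of_nonneg_left hjk hw0.le) (hcov j (min_le_left _ _))
    (by rw [mul_assoc]; exact hcov k (min_le_right _ _))
  rwa [mul_div_mul_left _ _ hw0.ne', mul_assoc] at hcost

end Covering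

namespace SeparatedScales

variable {φ ψ : ℝ → ℝ} {Q : ℝ} {m : ℕ → ℝ} {N : ℕ} {g : ℕ → ℝ → ℝ}

theorem coverFrac_mul_le_cost (hm : SeparatedScales φ Q m) (hφ : IsPhi φ) (hψ : IsPsi ψ)
    (hN : 0 < N) (hg : Admissible (blockFn m (blockHeight φ m N) N) g) {M n k : ℕ} (hMn : M ≤ n)
    (hk : k < N) :
    coverFrac m (blockHeight φ m N) (g n) k * ENNReal.ofReal (ψ M / N) ≤
      ENNReal.ofReal (ψ ((n : ℝ) + 1) * phiCost φ (g n)) := by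
  have hb : ∀ i, 0 < blockHeight φ m N i := fun i => blockHeight_pos hN (hm.apply_pos hφ i)
  have h := min_coverFrac_mul_le_phiCost hφ hm.pos hb (hm.sum_range_le_one N) (hg.1 n)
    (hg.2.1 n).ne hk (mul_le_of_le_one_right (hb k).le (hm.le_one k))
    (hψ.nonneg (by positivity : (0 : ℝ) ≤ n + 1))
  rw [min_self, mul_div_cancel_left₀ _ (hb k).ne', blockHeight_mul_apply (hm.apply_pos hφ k).ne',
    ← div_eq_mul_inv] at h
  refine le_trans ?_ h
  gcongr
  exact hψ.apply_le_apply M.cast_nonneg (by exact_mod_cast hMn.trans n.le_succ)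

theorem min_coverFrac_mul_le_cost {M : ℕ} (hm : SeparatedScales φ (N * ψ M / ψ 1) m)
    (hφ : IsPhi φ) (hψ : IsPsi ψ) (hN : 0 < N)
    (hg : Admissible (blockFn m (blockHeight φ m N) N) g) {n j k : ℕ} (hjk : j < k) (hk : k < N) :
    min (coverFrac m (blockHeight φ m N) (g n) j) (coverFrac m (blockHeight φ m N) (g n) k) *
      ENNReal.ofReal (ψ M) ≤ ENNReal.ofReal (ψ ((n : ℝ) + 1) * phiCost φ (g n)) := by
  set b := blockHeight φ m N
  have hφm := hm.apply_pos hφ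
  have hb : ∀ i, 0 < b i := fun i => blockHeight_pos hN (hφm i)
  have hbm : b j * m j ≤ b k := (mul_le_of_le_one_right (hb j).le (hm.le_one j)).trans
    (inv_anti₀ (mul_pos (Nat.cast_pos.2 hN) (hφm k)) (by gcongr; exact hm.apply_le_apply hφ hjk.le))
  have hψn : ψ 1 ≤ ψ ((n : ℝ) + 1) := hψ.apply_le_apply zero_le_one (by simp)
  refine le_trans ?_ (min_coverFrac_mul_le_phiCost hφ hm.pos hb (hm.sum_range_le_one N) (hg.1 n)
    (hg.2.1 n).ne hk hbm (hψ.nonneg (by positivity)))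
  gcongr
  have hψ1 : 0 < ψ 1 := hψ.pos 1 one_pos
  have hbT : ψ M / ψ 1 ≤ b k * φ (b j * m j / b k) :=
    calc ψ M / ψ 1 = b k * (N * ψ M / ψ 1 * φ (m k)) := by
          rw [mul_left_comm (b k), blockHeight_mul_apply (hφm k).ne']
          field_simp
      _ ≤ b k * φ (b j * m j / b k) := by
          rw [show b j * m j / b k = m j * (φ (m k) / φ (m j)) by
            simp only [b, blockHeight]; field_simp [(hφm j).ne', (hφm k).ne']]
          exact mul_le_mul_of_nonneg_left (hm.sep j k hjk) (hb k).le
  calc ψ M = ψ 1 * (ψ M / ψ 1) := by field_simp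
    _ ≤ ψ ((n : ℝ) + 1) * (b k * φ (b j * m j / b k)) :=
        mul_le_mul hψn hbT (div_nonneg (hψ.nonneg M.cast_nonneg) hψ1.le) (hψ1.le.trans hψn)

theorem ofReal_le_four_mul_seqCost {M : ℕ} (hNM : N = 2 * M) (hM : 1 ≤ M)
    (hm : SeparatedScales φ (N * ψ M / ψ 1) m) (hφ : IsPhi φ) (hψ : IsPsi ψ)
    (hg : Admissible (blockFn m (blockHeight φ m N) N) g) :
    ENNReal.ofReal (ψ M) ≤ 4 * seqCost φ ψ g := by
  have hN : 0 < N := by omega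
  have hcover := mul_le_add_tsum_of_cover (y := ENNReal.ofReal (ψ M / N))
    (fun n k => coverFrac m (blockHeight φ m N) (g n) k)
    (fun n => ENNReal.ofReal (ψ ((n : ℝ) + 1) * phiCost φ (g n)))
    (fun k hk => one_le_tsum_coverFrac hm.pos (fun i => blockHeight_pos hN (hm.apply_pos hφ i))
      (hm.sum_range_le_one N) hg hk)
    (fun n k => coverFrac_le_one _ _) (fun n hn k hk => hm.coverFrac_mul_le_cost hφ hψ hN hg hn hk)
    fun n k hk j hjk => (natCast_mul_ofReal_div hN (ψ M)).symm ▸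
      hm.min_coverFrac_mul_le_cost hφ hψ hN hg hjk hk
  set X := (M : ℝ≥0∞) * ENNReal.ofReal (ψ M / N)
  have hNX : (N : ℝ≥0∞) * ENNReal.ofReal (ψ M / N) = X + X := by
    rw [show (N : ℝ≥0∞) = M + M by rw [hNM]; push_cast; ring, add_mul]
  rw [hNX] at hcover
  have hX := ENNReal.le_of_add_le_add_left (mul_ne_top (natCast_ne_top M) ofReal_ne_top) hcover
  calc ENNReal.ofReal (ψ M) = X + X := (natCast_mul_ofReal_div hN _).symm.trans hNX
    _ ≤ 4 * seqCost φ ψ g := by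
        rw [seqCost_eq, ← two_mul, show (4 : ℝ≥0∞) = 2 * 2 by norm_num, mul_assoc]
        gcongr

end SeparatedScales

theorem psi_natCast_le_of_QANorm_le {φ ψ : ℝ → ℝ} (hφ : IsPhi φ) (hψ : IsPsi ψ)
    (hφ0 : Tendsto φ (𝓝[>] 0) (𝓝 0)) (hφslope : Tendsto (fun t => φ t / t) (𝓝[>] 0) atTop)
    {c p : ℝ} (hc : 0 < c) (hp : 0 < p) (hreg : MonotoneOn (fun t => φ t / t ^ c) (Ioc 0 p))
    {K : ℝ} (hK : 0 ≤ K)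
    (hupper : ∀ f : ℝ → ℝ, AEMeasurable f μ01 → QANorm φ ψ f ≤ ENNReal.ofReal K * lorentzNorm φ f)
    {M : ℕ} (hM : 1 ≤ M) : ψ M ≤ 8 * K := by
  set N := 2 * M with hNM
  have hN : 0 < N := by omega
  have hQ : 1 ≤ (N : ℝ) * ψ M / ψ 1 := by
    rw [one_le_div (hψ.pos 1 one_pos)]
    calc ψ 1 ≤ ψ M := hψ.apply_le_apply zero_le_one (by exact_mod_cast hM)
      _ ≤ N * ψ M := le_mul_of_one_le_left (hψ.nonneg M.cast_nonneg) (by exact_mod_cast hN)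
  obtain ⟨m, hm⟩ := exists_separatedScales hφ hφslope hc hp hreg hQ
  set f := blockFn m (blockHeight φ m N) N
  have hcost : ENNReal.ofReal (ψ M) ≤ 4 * QANorm φ ψ f := by
    rw [QANorm, ENNReal.mul_iInf_of_ne (by norm_num) (by norm_num)]
    refine le_iInf fun g => ?_
    rw [ENNReal.mul_iInf_of_ne (by norm_num) (by norm_num)]
    exact le_iInf (hm.ofReal_le_four_mul_seqCost hNM hM hφ hψ)
  have h : ENNReal.ofReal (ψ M) ≤ ENNReal.ofReal (8 * K) :=
    calc ENNReal.ofReal (ψ M) ≤ 4 * QANorm φ ψ f := hcost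
      _ ≤ 4 * (ENNReal.ofReal K * 2) :=
          mul_le_mul_right ((hupper f measurable_blockFn.aemeasurable).trans
            (mul_le_mul_right (hm.lorentzNorm_blockFn_le hφ hφ0 hN) _)) 4
      _ = ENNReal.ofReal (8 * K) := by
          rw [ofReal_mul (by norm_num), ofReal_ofNat]
          ring
  exact (ofReal_le_ofReal_iff (by positivity)).1 h

theorem stmt19_general {φ ψ : ℝ → ℝ} (hφ : IsPhi φ) (hψ : IsPsi ψ)
    (hφ0 : Tendsto φ (𝓝[>] 0) (𝓝 0))
    (hφslope : Tendsto (fun t => φ t / t) (𝓝[>] 0) atTop)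
    (c p : ℝ) (hc : 0 < c) (hp : 0 < p)
    (hreg : MonotoneOn (fun t => φ t / t ^ c) (Set.Ioc 0 p))
    (hequiv : ∃ K1 K2 : ℝ, 0 < K1 ∧ 0 < K2 ∧ ∀ f : ℝ → ℝ, AEMeasurable f μ01 →
      ENNReal.ofReal K1 * lorentzNorm φ f ≤ QANorm φ ψ f ∧
      QANorm φ ψ f ≤ ENNReal.ofReal K2 * lorentzNorm φ f) :
    ∃ M : ℝ, ∀ t : ℝ, 1 ≤ t → ψ t ≤ M := by
  obtain ⟨_, K, _, hK, hbound⟩ := hequiv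
  refine ⟨8 * K, fun t ht => ?_⟩
  calc ψ t ≤ ψ ⌈t⌉₊ := hψ.apply_le_apply (by linarith) (Nat.le_ceil t)
    _ ≤ 8 * K := psi_natCast_le_of_QANorm_le hφ hψ hφ0 hφslope hc hp hreg hK.le
        (fun f hf => (hbound f hf).2) (Nat.lt_ceil.2 (by simpa using zero_lt_one.trans_le ht))

/-- necessity in `QA_{φ,ψ} = Λ_φ ↔ ψ ≍ 1`: if the quasi-norm `‖·‖_{φ,ψ}` is
equivalent to the Lorentz norm `‖·‖_{Λ_φ}`, then `ψ` is bounded on `[1,∞)`. -/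
theorem stmt19 {φ ψ : ℝ → ℝ} (hφ : IsPhi φ) (hψ : IsPsi ψ)
    (hφ0 : Tendsto φ (𝓝[>] 0) (𝓝 0))
    (hφslope : Tendsto (fun t => φ t / t) (𝓝[>] 0) atTop)
    (c p : ℝ) (hc : 0 < c) (hc1 : c < 1) (hp : 0 < p) (hp1 : p ≤ 1)
    (hreg : MonotoneOn (fun t => φ t / t ^ c) (Set.Ioc 0 p))
    (C : ℝ) (hC : 1 ≤ C) (hψC : ∀ n : ℕ, 1 ≤ n → ψ ((n : ℝ) ^ 2) ≤ C * ψ (n : ℝ))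
    (hequiv : ∃ K1 K2 : ℝ, 0 < K1 ∧ 0 < K2 ∧ ∀ f : ℝ → ℝ, AEMeasurable f μ01 →
      ENNReal.ofReal K1 * lorentzNorm φ f ≤ QANorm φ ψ f ∧
      QANorm φ ψ f ≤ ENNReal.ofReal K2 * lorentzNorm φ f) :
    ∃ M : ℝ, ∀ t : ℝ, 1 ≤ t → ψ t ≤ M :=
  stmt19_general hφ hψ hφ0 hφslope c p hc hp hreg hequiv
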